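/- arXiv:2005.02923 — 2 statements merged into one kernel-verified Lean document; each statement's English description precedes it below -/
import Mathlib

section
/- Let d ≥ 2 be an integer. There exists a constant C > 0, depending only on d, such that the following holds. Let α₁, …, α_d ∈ ℂ, let L be the lattice L = {(n₁,…,n_d) ∈ ℤ^d : α₁n₁ + … + α_d n_d = 0}, let H₁,…,H_d be positive integers, let D = {(x₁,…,x_d) ∈ ℝ^d : |x_i| ≤ H_i for all i}, and set H = max_{1≤i≤d} H_i. If L ∩ D contains d−1 linearly independent points (over ℝ) and α_ℓ ≠ 0 for some 1 ≤ ℓ ≤ d, then there exists an index 1 ≤ j ≤ d with α_j ≠ 0 such that for each i = 1,…,d there exist integers a_i and b_i with α_i/α_j = a_i/b_i, gcd(a_i,b_i) = 1, b_i ≠ 0, and |a_i|, |b_i| ≤ C·H^d. -/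
/-!
The `d - 1` independent lattice vectors `v₁, …, v_{d-1}` have a generalized cross product
`w ∈ ℤ^d` (the signed maximal minors of the matrix with rows `vₖ`), which is nonzero and
orthogonal to every `vₖ`; the Leibniz expansion of the minors bounds its entries by
`(d-1)! H^(d-1)`. Over `ℂ` the vectors orthogonal to all `vₖ` form a line, so `α` is a multiple
of `w`, and `αᵢ / α_j = wᵢ / w_j` for any `j` with `w_j ≠ 0`; reducing these fractions only
shrinks numerator and denominator.
-/

namespace Matrix

variable {R : Type*} [CommRing R] {n : ℕ}

/-- The generalized cross product of `n` vectors in `R^(n+1)`: the cofactors of the first row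
of the matrix whose remaining rows are the given vectors. -/
def crossVec (v : Fin n → Fin (n + 1) → R) (j : Fin (n + 1)) : R :=
  (-1) ^ (j : ℕ) * ((of v).submatrix id j.succAbove).det

variable (v : Fin n → Fin (n + 1) → R)

theorem det_of_cons (x : Fin (n + 1) → R) : (of (Fin.cons x v)).det = x ⬝ᵥ crossVec v := by
  rw [det_succ_row_zero, dotProduct]
  refine Finset.sum_congr rfl fun j _ => ?_
  rw [crossVec, of_apply, Fin.cons_zero, mul_left_comm, ← mul_assoc]
  rfl

theorem dotProduct_crossVec (k : Fin n) : v k ⬝ᵥ crossVec v = 0 := by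
  rw [← det_of_cons]
  exact det_zero_of_row_eq (Fin.succ_ne_zero k).symm (funext fun i => by simp)

theorem map_crossVec {S : Type*} [CommRing S] (f : R →+* S) (j : Fin (n + 1)) :
    f (crossVec v j) = crossVec (fun k i => f (v k i)) j := by
  rw [crossVec, map_mul, map_pow, map_neg, map_one, RingHom.map_det]
  rfl

theorem intCast_crossVec (v : Fin n → Fin (n + 1) → ℤ) (j : Fin (n + 1)) :
    ((crossVec v j : ℤ) : R) = crossVec (fun k i => (v k i : R)) j :=
  map_crossVec v (Int.castRingHom R) j

theorem abs_crossVec_le {R : Type*} [CommRing R] [LinearOrder R] [IsStrictOrderedRing R]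
    {v : Fin n → Fin (n + 1) → R} {H : R} (hv : ∀ k i, |v k i| ≤ H) (j : Fin (n + 1)) :
    |crossVec v j| ≤ n.factorial * H ^ n := by
  have := det_le (abv := AbsoluteValue.abs) (A := (of v).submatrix id j.succAbove)
    fun k i => hv k _
  simpa [crossVec, abs_mul, nsmul_eq_mul] using this

theorem crossVec_ne_zero {K : Type*} [Field K] {v : Fin n → Fin (n + 1) → K}
    (hv : LinearIndependent K v) : crossVec v ≠ 0 := by
  obtain ⟨x, hx⟩ : ∃ x, x ∉ Submodule.span K (Set.range v) := by
    by_contra! h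
    have := finrank_range_le_card (R := K) v
    rw [Set.finrank, Submodule.eq_top_iff'.mpr h, finrank_top, Module.finrank_fin_fun] at this
    simp at this
  have hdet : (of (Fin.cons x v)).det ≠ 0 :=
    ((isUnit_iff_isUnit_det _).mp <| linearIndependent_rows_iff_isUnit (A := of (Fin.cons x v)).mp
      (linearIndependent_finCons.mpr ⟨hv, hx⟩)).ne_zero
  intro h
  simp [det_of_cons, h] at hdet

/-- The difference of the two sides is killed by the matrix with rows `e_j, v₁, …, vₙ`, whose
determinant is `crossVec v j`. -/
theorem crossVec_smul_eq_smul [NoZeroDivisors R] {y : Fin (n + 1) → R}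
    (hy : ∀ k, v k ⬝ᵥ y = 0) {j : Fin (n + 1)} (hj : crossVec v j ≠ 0) :
    crossVec v j • y = y j • crossVec v := by
  rw [← sub_eq_zero]
  refine eq_zero_of_mulVec_eq_zero (M := of (Fin.cons (Pi.single j 1) v)) ?_ ?_
  · simpa [det_of_cons] using hj
  · ext r
    refine Fin.cases ?_ (fun k => ?_) r
    · show Pi.single j 1 ⬝ᵥ (crossVec v j • y - y j • crossVec v) = 0
      simp [mul_comm]
    · show v k ⬝ᵥ (crossVec v j • y - y j • crossVec v) = 0
      rw [dotProduct_sub, dotProduct_smul, dotProduct_smul, hy, dotProduct_crossVec, smul_zero,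
        smul_zero, sub_zero]

theorem exists_div_eq_crossVec_div {F K : Type*} [Field F] [CharZero F] [Field K] [CharZero K]
    {v : Fin n → Fin (n + 1) → ℤ} (hv : LinearIndependent F fun k i => (v k i : F))
    {α : Fin (n + 1) → K} (hα : ∀ k, ∑ i, α i * v k i = 0) (hα0 : α ≠ 0) :
    ∃ j, crossVec v j ≠ 0 ∧ α j ≠ 0 ∧ ∀ i, α i / α j = crossVec v i / crossVec v j := by
  obtain ⟨j, hj⟩ : ∃ j, crossVec v j ≠ 0 := by
    by_contra! h
    refine crossVec_ne_zero hv (funext fun j => ?_)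
    rw [← intCast_crossVec, h j, Int.cast_zero, Pi.zero_apply]
  have hjK : crossVec (fun k i => (v k i : K)) j ≠ 0 := by
    rwa [← intCast_crossVec, Int.cast_ne_zero]
  have hαv : ∀ k, (fun i => (v k i : K)) ⬝ᵥ α = 0 := fun k => by
    rw [dotProduct_comm]
    exact_mod_cast hα k
  have hprop : ∀ i, ((crossVec v j : ℤ) : K) * α i = α j * crossVec v i := fun i => by
    simpa only [Pi.smul_apply, smul_eq_mul, ← intCast_crossVec] using
      congrFun (crossVec_smul_eq_smul _ hαv hjK) i
  have hαj : α j ≠ 0 := fun h0 => hα0 <| funext fun i => by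
    simpa [h0, hj] using hprop i
  refine ⟨j, hj, hαj, fun i => ?_⟩
  rw [div_eq_div_iff hαj (by exact_mod_cast hj), mul_comm, hprop i, mul_comm]

end Matrix

theorem Int.exists_coprime_div_eq {K : Type*} [DivisionRing K] [CharZero K] (p : ℤ) {q : ℤ}
    (hq : q ≠ 0) :
    ∃ a b : ℤ, b ≠ 0 ∧ Int.gcd a b = 1 ∧ (p : K) / q = a / b ∧ |a| ≤ |p| ∧ |b| ≤ |q| := by
  obtain ⟨g, a, b, hg, hab, rfl, rfl⟩ := Int.exists_gcd_one' (Int.gcd_pos_of_ne_zero_right p hq)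
  have hg1 : (1 : ℤ) ≤ |(g : ℤ)| := by simpa [Nat.one_le_iff_ne_zero] using hg.ne'
  refine ⟨a, b, left_ne_zero_of_mul hq, hab, ?_, ?_, ?_⟩
  · push_cast
    exact mul_div_mul_right _ _ (by exact_mod_cast hg.ne')
  · rw [abs_mul]
    exact le_mul_of_one_le_right (abs_nonneg a) hg1
  · rw [abs_mul]
    exact le_mul_of_one_le_right (abs_nonneg b) hg1

theorem stmt_12_general (d : ℕ) :
    ∃ C : ℝ, 0 < C ∧
      ∀ (α : Fin d → ℂ) (Hv : Fin d → ℕ), (∀ i, 0 < Hv i) →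
        (∃ v : Fin (d - 1) → (Fin d → ℤ),
            (∀ k, (∑ i, α i * (v k i : ℂ)) = 0 ∧ ∀ i, |v k i| ≤ (Hv i : ℤ)) ∧
            LinearIndependent ℝ (fun k => fun i => ((v k i : ℝ)))) →
        (∃ ℓ, α ℓ ≠ 0) →
        ∃ j, α j ≠ 0 ∧
          ∀ i, ∃ a b : ℤ, b ≠ 0 ∧ Int.gcd a b = 1 ∧
            α i / α j = (a : ℂ) / (b : ℂ) ∧
            (|a| : ℝ) ≤ C * ((Finset.univ.sup Hv : ℕ) : ℝ) ^ d ∧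
            (|b| : ℝ) ≤ C * ((Finset.univ.sup Hv : ℕ) : ℝ) ^ d := by
  cases d with
  | zero => exact ⟨1, one_pos, fun _ _ _ _ ⟨ℓ, _⟩ => ℓ.elim0⟩
  | succ n =>
    rw [Nat.add_sub_cancel]
    refine ⟨n.factorial, by positivity, ?_⟩
    rintro α Hv hHv ⟨v, hv, hli⟩ ⟨ℓ, hℓ⟩
    obtain ⟨j, hwj, hαj, hratio⟩ := Matrix.exists_div_eq_crossVec_div hli (fun k => (hv k).1)
      (fun h => hℓ (congrFun h ℓ))
    set H := Finset.univ.sup Hv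
    have hHv_le : ∀ i, Hv i ≤ H := fun i => Finset.le_sup (f := Hv) (Finset.mem_univ i)
    have hH : (1 : ℤ) ≤ H := by exact_mod_cast (hHv ℓ).trans_le (hHv_le ℓ)
    have hbound : ∀ i, |Matrix.crossVec v i| ≤ n.factorial * (H : ℤ) ^ (n + 1) := fun i => by
      refine (Matrix.abs_crossVec_le (H := (H : ℤ))
        (fun k c => (hv k).2 c |>.trans (by exact_mod_cast hHv_le c)) i).trans ?_
      gcongr
      exact n.le_succ
    refine ⟨j, hαj, fun i => ?_⟩
    obtain ⟨a, b, hb, hab, hdiv, ha, hb'⟩ :=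
      Int.exists_coprime_div_eq (K := ℂ) (Matrix.crossVec v i) hwj
    refine ⟨a, b, hb, hab, (hratio i).trans hdiv, ?_, ?_⟩
    · exact_mod_cast ha.trans (hbound i)
    · exact_mod_cast hb'.trans (hbound j)

/-- Let `d ≥ 2`. There is a constant `C > 0` depending only on `d` such
that for any `α₁,…,α_d ∈ ℂ` and positive integers `H₁,…,H_d` with `H = max Hᵢ`: if the
lattice `L = {n ∈ ℤ^d : ∑ αᵢnᵢ = 0}` intersected with the box `|xᵢ| ≤ Hᵢ` contains `d−1`
points that are linearly independent over `ℝ`, and some `α_ℓ ≠ 0`, then there is an index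
`j` with `α_j ≠ 0` such that for each `i` there are integers `aᵢ, bᵢ` with
`αᵢ/α_j = aᵢ/bᵢ`, `gcd(aᵢ,bᵢ) = 1`, `bᵢ ≠ 0` and `|aᵢ|, |bᵢ| ≤ C·H^d`. -/
theorem stmt_12 (d : ℕ) (hd : 2 ≤ d) :
    ∃ C : ℝ, 0 < C ∧
      ∀ (α : Fin d → ℂ) (Hv : Fin d → ℕ), (∀ i, 0 < Hv i) →
        (∃ v : Fin (d - 1) → (Fin d → ℤ),
            (∀ k, (∑ i, α i * (v k i : ℂ)) = 0 ∧ ∀ i, |v k i| ≤ (Hv i : ℤ)) ∧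
            LinearIndependent ℝ (fun k => fun i => ((v k i : ℝ)))) →
        (∃ ℓ, α ℓ ≠ 0) →
        ∃ j, α j ≠ 0 ∧
          ∀ i, ∃ a b : ℤ, b ≠ 0 ∧ Int.gcd a b = 1 ∧
            α i / α j = (a : ℂ) / (b : ℂ) ∧
            (|a| : ℝ) ≤ C * ((Finset.univ.sup Hv : ℕ) : ℝ) ^ d ∧
            (|b| : ℝ) ≤ C * ((Finset.univ.sup Hv : ℕ) : ℝ) ^ d :=
  stmt_12_general d
end

section
/- Let d, e be positive integers and let ε > 0. There exist a constant c > 0 and an integer H₀ such that for every integer H ≥ H₀ and every prime p with H^d < p ≤ H^{d+e−ε} the following holds: defining, in F_p, α_i = (2H+1)^{i−1} for i = 1,…,d and β_j = (2H+1)^{j−1} for j = 1,…,e, there exists a nonzero λ₀ ∈ F_p such that the number of integer tuples (h₁,…,h_d, j₁,…,j_e) with |h_i| ≤ H for all i and |j_k| ≤ H for all k, satisfying (α₁h₁ + … + α_d h_d)·(β₁j₁ + … + β_e j_e) = λ₀ in F_p, is at least c·H^ε. -/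
/-!
Write `B = 2H + 1`. Digits `|hᵢ| ≤ H` form a balanced base-`B` expansion, so `h ↦ ∑ hᵢ Bⁱ` is
injective on the cube `[-H, H]ⁿ` and takes values in an interval of length `Bⁿ`; hence at most
`Bⁿ/p + 1` points of the cube give a sum divisible by `p`. For `p` and `B` large this means the
product of the two linear forms vanishes on at most half of the `B^(d+e)` pairs, and by pigeonhole
some nonzero `λ` is attained at least `B^(d+e)/(2p) ≥ H^(d+e)/(2p) ≥ H^ε/2` times.
-/

open Finset

def digitSum {n : ℕ} (B : ℤ) (a : Fin n → ℤ) : ℤ := ∑ i, a i * B ^ (i : ℕ)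

theorem digitSum_succ {n : ℕ} (B : ℤ) (a : Fin (n + 1) → ℤ) :
    digitSum B a = a 0 + B * digitSum B (Fin.tail a) := by
  simp only [digitSum, Fin.sum_univ_succ, Fin.val_zero, pow_zero, mul_one, Fin.val_succ,
    pow_succ, mul_sum, Fin.tail]
  congr 1
  exact sum_congr rfl fun _ _ => by ring

theorem digitSum_sub {n : ℕ} (B : ℤ) (a a' : Fin n → ℤ) :
    digitSum B (a - a') = digitSum B a - digitSum B a' := by
  simp only [digitSum, Pi.sub_apply, sub_mul, sum_sub_distrib]

theorem intCast_digitSum {R : Type*} [CommRing R] {n : ℕ} (B : ℤ) (a : Fin n → ℤ) :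
    ((digitSum B a : ℤ) : R) = ∑ i : Fin n, (B : R) ^ (i : ℕ) * (a i : R) := by
  simp only [digitSum, Int.cast_sum, Int.cast_mul, Int.cast_pow, mul_comm]

theorem eq_zero_of_digitSum_eq_zero {B : ℤ} :
    ∀ {n : ℕ} {a : Fin n → ℤ}, (∀ i, |a i| < B) → digitSum B a = 0 → a = 0
  | 0, a, _, _ => Subsingleton.elim a 0
  | n + 1, a, ha, hsum => by
    rw [digitSum_succ] at hsum
    have hB : B ≠ 0 := ((abs_nonneg _).trans_lt (ha 0)).ne'
    have h0 : a 0 = 0 :=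
      Int.eq_zero_of_abs_lt_dvd ⟨-digitSum B (Fin.tail a), by linarith⟩ (ha 0)
    rw [h0, zero_add, mul_eq_zero, or_iff_right hB] at hsum
    have htail : Fin.tail a = 0 := eq_zero_of_digitSum_eq_zero (fun i => ha i.succ) hsum
    ext i
    cases i using Fin.cases with
    | zero => exact h0
    | succ j => exact congr_fun htail j

theorem abs_digitSum_le {n : ℕ} {B C : ℤ} (hB : 0 ≤ B) {a : Fin n → ℤ} (ha : ∀ i, |a i| ≤ C) :
    |digitSum B a| ≤ C * ∑ i ∈ range n, B ^ i :=
  calc |digitSum B a| ≤ ∑ i : Fin n, |a i| * B ^ (i : ℕ) := by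
        refine (abs_sum_le_sum_abs _ _).trans_eq (sum_congr rfl fun i _ => ?_)
        rw [abs_mul, abs_pow, abs_of_nonneg hB]
    _ ≤ ∑ i : Fin n, C * B ^ (i : ℕ) := by gcongr with i; exact ha i
    _ = C * ∑ i ∈ range n, B ^ i := by rw [← mul_sum, Fin.sum_univ_eq_sum_range (B ^ ·)]

noncomputable def intCube (n H : ℕ) : Finset (Fin n → ℤ) :=
  Fintype.piFinset fun _ => Icc (-(H : ℤ)) H

theorem mem_intCube {n H : ℕ} {a : Fin n → ℤ} : a ∈ intCube n H ↔ ∀ i, |a i| ≤ H := by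
  simp only [intCube, Fintype.mem_piFinset, mem_Icc, abs_le]

theorem card_intCube (n H : ℕ) : #(intCube n H) = (2 * H + 1) ^ n := by
  simp only [intCube, Fintype.card_piFinset, Int.card_Icc, prod_const, card_univ,
    Fintype.card_fin]
  congr 1
  omega

theorem digitSum_injOn_intCube (n H : ℕ) :
    Set.InjOn (digitSum (2 * H + 1)) (intCube n H : Set (Fin n → ℤ)) := by
  intro a ha a' ha' h
  rw [mem_coe, mem_intCube] at ha ha'
  rw [← sub_eq_zero]
  refine eq_zero_of_digitSum_eq_zero (fun i => ?_) (by rw [digitSum_sub, h, sub_self])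
  have hi := abs_le.mp (ha i)
  have hi' := abs_le.mp (ha' i)
  rw [Pi.sub_apply, abs_lt]
  constructor <;> linarith

theorem Int.card_filter_dvd_Ioc_le {r a b : ℤ} (hr : 0 < r) (hab : a ≤ b) :
    (#{x ∈ Ioc a b | r ∣ x} : ℝ) ≤ (b - a) / r + 1 := by
  have hfloor : ((⌊(b : ℚ) / r⌋ - ⌊(a : ℚ) / r⌋ : ℤ) : ℚ) ≤ (b - a) / r + 1 := by
    have := Int.floor_le ((b : ℚ) / r)
    have := Int.lt_floor_add_one ((a : ℚ) / r)
    rw [sub_div]; push_cast; linarith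
  have hnonneg : (0 : ℚ) ≤ (b - a) / r + 1 := by
    have : (0 : ℚ) ≤ b - a := by exact_mod_cast sub_nonneg.mpr hab
    positivity
  have hq : ((#{x ∈ Ioc a b | r ∣ x} : ℤ) : ℚ) ≤ (b - a) / r + 1 := by
    rw [Int.Ioc_filter_dvd_card a b hr, Int.cast_max]
    exact max_le hfloor (by simpa using hnonneg)
  exact_mod_cast hq

theorem two_mul_mul_geom_sum_add_one (H : ℤ) (n : ℕ) :
    2 * (H * ∑ i ∈ range n, (2 * H + 1) ^ i) + 1 = (2 * H + 1) ^ n := by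
  have := geom_sum_mul (2 * H + 1) n
  linear_combination this

theorem card_filter_dvd_digitSum_le {p : ℕ} (hp : 0 < p) (n H : ℕ) :
    (#{a ∈ intCube n H | (p : ℤ) ∣ digitSum (2 * H + 1) a} : ℝ) ≤ (2 * H + 1) ^ n / p + 1 := by
  set M : ℤ := H * ∑ i ∈ range n, (2 * (H : ℤ) + 1) ^ i
  have hM : 2 * M + 1 = (2 * H + 1) ^ n := two_mul_mul_geom_sum_add_one H n
  have hmaps : ∀ a ∈ intCube n H, digitSum (2 * H + 1) a ∈ Ioc (-M - 1) M := by
    intro a ha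
    have := abs_le.mp (abs_digitSum_le (B := 2 * H + 1) (by positivity) (mem_intCube.mp ha))
    rw [mem_Ioc]; constructor <;> linarith
  have hinj : #{a ∈ intCube n H | (p : ℤ) ∣ digitSum (2 * H + 1) a}
      ≤ #{x ∈ Ioc (-M - 1) M | (p : ℤ) ∣ x} := by
    refine card_le_card_of_injOn _ (fun a ha => ?_)
      ((digitSum_injOn_intCube n H).mono (filter_subset _ _))
    rw [mem_coe, mem_filter] at ha ⊢
    exact ⟨hmaps a ha.1, ha.2⟩
  have hMℝ : 2 * (M : ℝ) + 1 = (2 * H + 1) ^ n := by exact_mod_cast hM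
  calc (#{a ∈ intCube n H | (p : ℤ) ∣ digitSum (2 * H + 1) a} : ℝ)
      ≤ #{x ∈ Ioc (-M - 1) M | (p : ℤ) ∣ x} := by exact_mod_cast hinj
    _ ≤ ((M : ℝ) - (-M - 1 : ℤ)) / (p : ℤ) + 1 :=
        Int.card_filter_dvd_Ioc_le (by positivity) (by linarith [show 0 ≤ M by positivity])
    _ = (2 * H + 1) ^ n / p + 1 := by push_cast; rw [← hMℝ]; ring

theorem card_filter_mul_eq_zero_le {α β M₀ : Type*} [MulZeroClass M₀] [NoZeroDivisors M₀]
    [DecidableEq M₀] (s : Finset α) (t : Finset β) (f : α → M₀) (g : β → M₀) :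
    #{x ∈ s ×ˢ t | f x.1 * g x.2 = 0} ≤ #{a ∈ s | f a = 0} * #t + #s * #{b ∈ t | g b = 0} := by
  classical
  calc #{x ∈ s ×ˢ t | f x.1 * g x.2 = 0}
      ≤ #({a ∈ s | f a = 0} ×ˢ t ∪ s ×ˢ {b ∈ t | g b = 0}) := by
        refine card_le_card fun x hx => ?_
        simp only [mem_filter, mem_product, mem_union, mul_eq_zero] at hx ⊢
        tauto
    _ ≤ _ := (card_union_le _ _).trans_eq (by rw [card_product, card_product])

theorem exists_ne_card_le_card_filter_add_mul {α β : Type*} [Fintype β] [DecidableEq β]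
    [Nontrivial β] (s : Finset α) (f : α → β) (b₀ : β) :
    ∃ b ≠ b₀, #s ≤ #{x ∈ s | f x = b₀} + Fintype.card β * #{x ∈ s | f x = b} := by
  obtain ⟨b, hb, hmax⟩ := exists_max_image (univ.erase b₀) (fun b => #{x ∈ s | f x = b})
    ((exists_ne b₀).imp fun b hb => mem_erase.mpr ⟨hb, mem_univ b⟩)
  refine ⟨b, ne_of_mem_erase hb, ?_⟩
  calc #s = #{x ∈ s | f x = b₀} + ∑ c ∈ univ.erase b₀, #{x ∈ s | f x = c} := by
        rw [add_sum_erase univ (fun c => #{x ∈ s | f x = c}) (mem_univ b₀)]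
        exact card_eq_sum_card_fiberwise fun x _ => mem_univ (f x)
    _ ≤ #{x ∈ s | f x = b₀} + #(univ.erase b₀) * #{x ∈ s | f x = b} := by
        gcongr; exact sum_le_card_nsmul _ _ _ hmax
    _ ≤ #{x ∈ s | f x = b₀} + Fintype.card β * #{x ∈ s | f x = b} := by
        gcongr; exact card_erase_le

theorem card_filter_digitSum_mul_eq_zero_le {p : ℕ} [Fact p.Prime] (hp : 8 ≤ p) {d e H : ℕ}
    (hd : 1 ≤ d) (he : 1 ≤ e) (hH : 4 ≤ H) :
    (#{x ∈ intCube d H ×ˢ intCube e H |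
        (digitSum (2 * H + 1) x.1 : ZMod p) * (digitSum (2 * H + 1) x.2 : ZMod p) = 0} : ℝ)
      ≤ (2 * H + 1) ^ (d + e) / 2 := by
  have hcard := card_filter_mul_eq_zero_le (intCube d H) (intCube e H)
    (fun a => (digitSum (2 * H + 1) a : ZMod p)) (fun b => (digitSum (2 * H + 1) b : ZMod p))
  simp only [ZMod.intCast_zmod_eq_zero_iff_dvd, card_intCube] at hcard
  have hd' := card_filter_dvd_digitSum_le (p := p) (by omega) d H
  have he' := card_filter_dvd_digitSum_le (p := p) (by omega) e H
  set Bd : ℝ := (2 * H + 1) ^ d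
  set Be : ℝ := (2 * H + 1) ^ e
  have hp' : (8 : ℝ) ≤ p := by exact_mod_cast hp
  have hB : (8 : ℝ) ≤ 2 * H + 1 := by norm_cast; omega
  have hBd : (8 : ℝ) ≤ Bd := hB.trans (le_self_pow₀ (by linarith) (by omega))
  have hBe : (8 : ℝ) ≤ Be := hB.trans (le_self_pow₀ (by linarith) (by omega))
  have hBdBe : Bd * Be / p ≤ Bd * Be / 8 :=
    div_le_div_of_nonneg_left (by positivity) (by norm_num) hp'
  calc _ ≤ ((#{a ∈ intCube d H | (p : ℤ) ∣ digitSum (2 * H + 1) a} * (2 * H + 1) ^ e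
          + (2 * H + 1) ^ d * #{b ∈ intCube e H | (p : ℤ) ∣ digitSum (2 * H + 1) b} : ℕ) : ℝ) := by
        exact_mod_cast hcard
    _ ≤ (Bd / p + 1) * Be + Bd * (Be / p + 1) := by push_cast; gcongr
    _ ≤ (2 * H + 1) ^ (d + e) / 2 := by
        rw [pow_add]
        have hexpand : (Bd / p + 1) * Be + Bd * (Be / p + 1) = 2 * (Bd * Be / p) + Be + Bd := by
          ring
        nlinarith

theorem stmt_14_general (d e : ℕ) (hd : 1 ≤ d) (he : 1 ≤ e) (ε : ℝ) :
    ∃ c : ℝ, 0 < c ∧ ∃ H₀ : ℕ, ∀ H : ℕ, H₀ ≤ H →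
      ∀ p : ℕ, p.Prime → H ^ d < p → (p : ℝ) ≤ (H : ℝ) ^ ((d + e : ℝ) - ε) →
        ∃ lam : ZMod p, lam ≠ 0 ∧
          c * (H : ℝ) ^ ε ≤
            (Set.ncard {hj : (Fin d → ℤ) × (Fin e → ℤ) |
              (∀ i, |hj.1 i| ≤ (H : ℤ)) ∧ (∀ k, |hj.2 k| ≤ (H : ℤ)) ∧
              (∑ i : Fin d, ((2 * H + 1 : ℕ) : ZMod p) ^ (i : ℕ) * (hj.1 i : ZMod p)) *
                (∑ k : Fin e, ((2 * H + 1 : ℕ) : ZMod p) ^ (k : ℕ) * (hj.2 k : ZMod p)) =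
                lam} : ℝ) := by
  refine ⟨1 / 2, by norm_num, 8, fun H hH p hp hlow hup => ?_⟩
  have : Fact p.Prime := ⟨hp⟩
  set F : (Fin d → ℤ) × (Fin e → ℤ) → ZMod p :=
    fun x => (digitSum (2 * H + 1) x.1 : ZMod p) * (digitSum (2 * H + 1) x.2 : ZMod p)
  obtain ⟨lam, hlam, hcount⟩ := exists_ne_card_le_card_filter_add_mul
    (intCube d H ×ˢ intCube e H) F 0
  refine ⟨lam, hlam, ?_⟩
  rw [card_product, card_intCube, card_intCube, ZMod.card, ← pow_add] at hcount
  have hzero := card_filter_digitSum_mul_eq_zero_le (p := p) (H := H)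
    (by have := Nat.le_self_pow (by omega : d ≠ 0) H; omega) hd he (by omega)
  have hHε : (p : ℝ) * (H : ℝ) ^ ε ≤ (2 * H + 1) ^ (d + e) := by
    have hH0 : (0 : ℝ) < H := by norm_cast; omega
    rw [Real.rpow_sub hH0, ← Nat.cast_add, Real.rpow_natCast, le_div_iff₀ (by positivity)] at hup
    exact hup.trans (pow_le_pow_left₀ hH0.le (by linarith) _)
  have hcount' := (Nat.cast_le (α := ℝ)).mpr hcount
  push_cast at hcount'
  calc 1 / 2 * (H : ℝ) ^ ε ≤ #{x ∈ intCube d H ×ˢ intCube e H | F x = lam} :=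
        le_of_mul_le_mul_left (by linarith) (Nat.cast_pos.mpr hp.pos)
    _ = _ := by
        rw [← Set.ncard_coe_finset]
        congr 2
        ext x
        simp [F, mem_intCube, intCast_digitSum, and_assoc]

/-- Let `d, e ≥ 1` and `ε > 0`. There exist `c > 0` and `H₀` such that
for every `H ≥ H₀` and every prime `p` with `H^d < p ≤ H^(d+e−ε)`: taking
`αᵢ = (2H+1)^(i−1)` (`i = 1,…,d`) and `β_j = (2H+1)^(j−1)` (`j = 1,…,e`) in `F_p`, there
is a nonzero `λ₀ ∈ F_p` such that the number of integer tuples `(h, j)` with all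
`|hᵢ| ≤ H`, `|j_k| ≤ H` and `(∑ αᵢhᵢ)·(∑ β_k j_k) = λ₀` in `F_p` is at least `c·H^ε`. -/
theorem stmt_14 (d e : ℕ) (hd : 1 ≤ d) (he : 1 ≤ e) (ε : ℝ) (hε : 0 < ε) :
    ∃ c : ℝ, 0 < c ∧ ∃ H₀ : ℕ, ∀ H : ℕ, H₀ ≤ H →
      ∀ p : ℕ, p.Prime → H ^ d < p → (p : ℝ) ≤ (H : ℝ) ^ ((d + e : ℝ) - ε) →
        ∃ lam : ZMod p, lam ≠ 0 ∧
          c * (H : ℝ) ^ ε ≤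
            (Set.ncard {hj : (Fin d → ℤ) × (Fin e → ℤ) |
              (∀ i, |hj.1 i| ≤ (H : ℤ)) ∧ (∀ k, |hj.2 k| ≤ (H : ℤ)) ∧
              (∑ i : Fin d, ((2 * H + 1 : ℕ) : ZMod p) ^ (i : ℕ) * (hj.1 i : ZMod p)) *
                (∑ k : Fin e, ((2 * H + 1 : ℕ) : ZMod p) ^ (k : ℕ) * (hj.2 k : ZMod p)) =
                lam} : ℝ) :=
  stmt_14_general d e hd he ε
end
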